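/- For two agents with additive valuations v1(a)=4, v1(b)=96, v2(a)=38, v2(b)=62 over goods {a,b}, under the distribution D_good uniform over ({a},{b}) and ({b},{a}) the maximum of the two agents' variances is 2116, while under D_min (probabilities 25/31 on ({a},{b}) and 6/31 on (∅,{a,b})) the maximum variance is (25/31)(6/31)·96² < 1439 < 2116. Hence D_good does not minimize the largest-variance objective over ex-ante proportional distributions. -/

import Mathlib

/-- The two agents' valuations: v1 = (4, 96), v2 = (38, 62) on goods (a, b). -/
def vs13 : Fin 2 → Fin 2 → ℝ := ![![4, 96], ![38, 62]]

/-- Value of agent `i`'s bundle in allocation `A` (good `g` goes to agent `A g`). -/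
def val13 (i : Fin 2) (A : Fin 2 → Fin 2) : ℝ := ∑ g, if A g = i then vs13 i g else 0

/-- Ex-ante proportional probability distribution over the four allocations. -/
def IsPropDist13 (p : (Fin 2 → Fin 2) → ℝ) : Prop :=
  (∀ A, 0 ≤ p A) ∧ (∑ A : Fin 2 → Fin 2, p A = 1) ∧
    ∀ i : Fin 2, 50 ≤ ∑ A : Fin 2 → Fin 2, p A * val13 i A

/-- Variance of agent `i`'s value under distribution `p`. -/
noncomputable def varAg13 (p : (Fin 2 → Fin 2) → ℝ) (i : Fin 2) : ℝ :=
  ∑ A : Fin 2 → Fin 2, p A * (val13 i A - ∑ B : Fin 2 → Fin 2, p B * val13 i B) ^ 2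

/-- Uniform distribution over ({a},{b}) (value vector (96,38)) and ({b},{a}) ((4,62)). -/
noncomputable def Dgood13 : (Fin 2 → Fin 2) → ℝ := fun A =>
  if A = ![1, 0] then 1 / 2 else if A = ![0, 1] then 1 / 2 else 0

/-- `D_min`: probability 25/31 on ({a},{b}) (value vector (96,38)) and 6/31 on (∅,{a,b}). -/
noncomputable def Dmin13 : (Fin 2 → Fin 2) → ℝ := fun A =>
  if A = ![1, 0] then 25 / 31 else if A = ![1, 1] then 6 / 31 else 0


lemma sum_fn2 (f : (Fin 2 → Fin 2) → ℝ) :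
    ∑ A : Fin 2 → Fin 2, f A = f ![0,0] + f ![0,1] + f ![1,0] + f ![1,1] := by
  rw [← (piFinTwoEquiv fun _ => Fin 2).symm.sum_comp]
  have h : (finZeroElim : Fin 0 → Fin 2) = ![] := funext fun x => x.elim0
  simp [Fintype.sum_prod_type, Fin.sum_univ_two, piFinTwoEquiv, h]
  ring

lemma varG0 : varAg13 Dgood13 0 = 2116 := by
  simp only [varAg13, sum_fn2, val13, vs13, Dgood13, Fin.sum_univ_two]
  norm_num [Fin.cons_inj, Fin.ext_iff]

lemma varG1 : varAg13 Dgood13 1 = 144 := by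
  simp only [varAg13, sum_fn2, val13, vs13, Dgood13, Fin.sum_univ_two]
  norm_num [Fin.cons_inj, Fin.ext_iff]

lemma varM0 : varAg13 Dmin13 0 = (25/31)*(6/31)*96^2 := by
  simp only [varAg13, sum_fn2, val13, vs13, Dmin13, Fin.sum_univ_two]
  norm_num [Fin.cons_inj, Fin.ext_iff]

lemma varM1 : varAg13 Dmin13 1 = 600 := by
  simp only [varAg13, sum_fn2, val13, vs13, Dmin13, Fin.sum_univ_two]
  norm_num [Fin.cons_inj, Fin.ext_iff]

lemma propMin : IsPropDist13 Dmin13 := by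
  refine ⟨fun A => ?_, ?_, fun i => ?_⟩
  · unfold Dmin13; split_ifs <;> norm_num
  · simp only [sum_fn2, Dmin13]
    norm_num [Fin.cons_inj, Fin.ext_iff]
  · fin_cases i <;>
      (simp only [sum_fn2, Dmin13, val13, vs13, Fin.sum_univ_two]
       norm_num [Fin.cons_inj, Fin.ext_iff])

/-- under `D_good` the maximum variance is 2116, under `D_min` it is
(25/31)(6/31)·96² < 1439 < 2116, `D_min` is ex-ante proportional, and hence `D_good` does
not minimize the largest-variance objective over ex-ante proportional distributions. -/
theorem Dgood_not_maxVariance_minimizer :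
    (max (varAg13 Dgood13 0) (varAg13 Dgood13 1) = 2116) ∧
    (max (varAg13 Dmin13 0) (varAg13 Dmin13 1) = (25 / 31) * (6 / 31) * 96 ^ 2) ∧
    ((25 / 31 : ℝ) * (6 / 31) * 96 ^ 2 < 1439) ∧
    ((1439 : ℝ) < 2116) ∧
    IsPropDist13 Dmin13 ∧
    ¬ (∀ q : (Fin 2 → Fin 2) → ℝ, IsPropDist13 q →
        max (varAg13 Dgood13 0) (varAg13 Dgood13 1)
          ≤ max (varAg13 q 0) (varAg13 q 1)) := by
  refine ⟨?_, ?_, by norm_num, by norm_num, propMin, ?_⟩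
  · rw [varG0, varG1]; norm_num
  · rw [varM0, varM1]; norm_num
  · intro h
    have := h Dmin13 propMin
    rw [varG0, varG1, varM0, varM1] at this
    simp only [max_le_iff] at this
    norm_num at this
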